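/- Let b > 0. Then there exists ε₀ > 0 such that for every ε ∈ (0, ε₀), the 2×2 real symmetric matrices M_ε(P) and M_ε(−P), where P = [[1, 0],[b, 1]], are both negative definite (so each has signature −2). -/

import Mathlib

open Matrix

/-- `M_ε(P) = Pᵀ S⁻(ε) P + S⁺(ε)` for `2 × 2` matrices, where
`S⁻(ε) = [[sin 2ε, −cos 2ε], [−cos 2ε, −sin 2ε]]` and
`S⁺(ε) = [[sin 2ε, cos 2ε], [cos 2ε, −sin 2ε]]`. -/
noncomputable def Meps2 (ε : ℝ) (P : Matrix (Fin 2) (Fin 2) ℝ) : Matrix (Fin 2) (Fin 2) ℝ :=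
  Pᵀ * !![Real.sin (2 * ε), -Real.cos (2 * ε); -Real.cos (2 * ε), -Real.sin (2 * ε)] * P
    + !![Real.sin (2 * ε), Real.cos (2 * ε); Real.cos (2 * ε), -Real.sin (2 * ε)]

/-!
Since `M_ε(-P) = M_ε(P)`, only the shear `P = [[1, 0], [b, 1]]` matters. With `s = sin 2ε` and
`c = cos 2ε`, a direct computation gives `-M_ε(P) = [[b² s + 2(b c - s), b s], [b s, 2 s]]`, whose
determinant is `s (b² s + 4(b c - s))`. So `-M_ε(P)` is positive definite as soon as `0 < s < b c`,
and this holds for all small `ε > 0`: `s > 0` for `0 < 2ε < π`, and `s < b c` reads `0 < b` at `ε = 0`.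
-/

open Filter Topology Real

/-- Completing the square: `a * (a x² + 2c x y + d y²) = (a x + c y)² + (a d - c²) y²`. -/
theorem Matrix.posDef_fin_two_of_pos_of_det_pos {a c d : ℝ} (ha : 0 < a)
    (hdet : 0 < a * d - c * c) : (!![a, c; c, d]).PosDef := by
  rw [posDef_iff_dotProduct_mulVec]
  refine ⟨by ext i j; fin_cases i <;> fin_cases j <;> rfl, fun x hx => ?_⟩
  have hquad : star x ⬝ᵥ (!![a, c; c, d] *ᵥ x)
      = a * x 0 * x 0 + 2 * c * x 0 * x 1 + d * x 1 * x 1 := by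
    simp [dotProduct, mulVec, Fin.sum_univ_two]; ring
  rw [hquad]
  rcases eq_or_ne (x 1) 0 with h1 | h1
  · have h0 : x 0 ≠ 0 := fun h0 => hx (by ext i; fin_cases i <;> simp [h0, h1])
    rw [h1]; nlinarith [mul_pos ha (mul_self_pos.2 h0)]
  · nlinarith [sq_nonneg (a * x 0 + c * x 1), mul_pos hdet (mul_self_pos.2 h1)]

theorem Meps2_neg (ε : ℝ) (P : Matrix (Fin 2) (Fin 2) ℝ) : Meps2 ε (-P) = Meps2 ε P := by
  simp only [Meps2, transpose_neg, Matrix.neg_mul, Matrix.mul_neg, neg_neg]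

theorem neg_Meps2_shear (ε b : ℝ) :
    -(Meps2 ε !![1, 0; b, 1]) =
      !![b ^ 2 * sin (2 * ε) + 2 * (b * cos (2 * ε) - sin (2 * ε)), b * sin (2 * ε);
        b * sin (2 * ε), 2 * sin (2 * ε)] := by
  ext i j
  fin_cases i <;> fin_cases j <;>
    simp [Meps2, transpose_apply, mul_apply, Fin.sum_univ_two] <;> ring

theorem posDef_neg_Meps2_shear {ε b : ℝ} (hs : 0 < sin (2 * ε))
    (hsc : sin (2 * ε) < b * cos (2 * ε)) : (-(Meps2 ε !![1, 0; b, 1])).PosDef := by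
  rw [neg_Meps2_shear]
  apply posDef_fin_two_of_pos_of_det_pos
  · positivity
  · nlinarith [mul_pos hs (mul_pos hs hs)]

theorem eventually_sin_two_mul_pos_and_lt_mul_cos {b : ℝ} (hb : 0 < b) :
    ∀ᶠ ε in 𝓝[>] 0, 0 < sin (2 * ε) ∧ sin (2 * ε) < b * cos (2 * ε) := by
  have hcont : Continuous fun ε : ℝ => b * cos (2 * ε) - sin (2 * ε) := by fun_prop
  have hlt : ∀ᶠ ε in 𝓝 (0 : ℝ), 0 < b * cos (2 * ε) - sin (2 * ε) :=
    hcont.continuousAt.eventually (lt_mem_nhds (by simpa using hb))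
  have hpi : ∀ᶠ ε in 𝓝 (0 : ℝ), ε < π / 2 := gt_mem_nhds (by positivity)
  filter_upwards [self_mem_nhdsWithin, nhdsWithin_le_nhds hlt, nhdsWithin_le_nhds hpi]
    with ε (hε : 0 < ε) hgap hsmall
  exact ⟨sin_pos_of_pos_of_lt_pi (by linarith) (by linarith), by linarith⟩

/-- A real symmetric matrix is negative definite iff its negative is positive definite. -/
theorem stmt_17 (b : ℝ) (hb : 0 < b) :
    ∃ ε₀ > (0 : ℝ), ∀ ε : ℝ, 0 < ε → ε < ε₀ →
      (-(Meps2 ε !![1, 0; b, 1])).PosDef ∧ (-(Meps2 ε (-!![1, 0; b, 1]))).PosDef := by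
  obtain ⟨ε₀, hε₀, hsub⟩ :=
    mem_nhdsGT_iff_exists_Ioo_subset.1 (eventually_sin_two_mul_pos_and_lt_mul_cos hb)
  refine ⟨ε₀, hε₀, fun ε hε hεε₀ => ?_⟩
  obtain ⟨hs, hsc⟩ := hsub ⟨hε, hεε₀⟩
  rw [Meps2_neg]
  exact ⟨posDef_neg_Meps2_shear hs hsc, posDef_neg_Meps2_shear hs hsc⟩
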